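/- arXiv:2602.06264 — 6 statements merged into one kernel-verified Lean document; each statement's English description precedes it below -/
import Mathlib

section
/- Let $v_1, \dots, v_T \in \mathbb{R}^d$ each have Euclidean norm at most $B$, and suppose that for every $t \ge 2$, $\langle \frac{1}{t-1}\sum_{\tau=1}^{t-1} v_\tau, v_t \rangle \le \epsilon_t$ for some $\epsilon_t \ge 0$. Then $\|\sum_{\tau=1}^T v_\tau\|_2 \le \sqrt{T B^2 + 2\sum_{t=2}^T (t-1)\epsilon_t}$. -/
open RealInnerProductSpace

lemma approx_pyth_sq (d : ℕ) (B : ℝ) (v : ℕ → EuclideanSpace ℝ (Fin d)) (ε : ℕ → ℝ) :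
    ∀ T : ℕ, (∀ t ∈ Finset.Icc 1 T, ‖v t‖ ≤ B) →
      (∀ t ∈ Finset.Icc 2 T, 0 ≤ ε t) →
      (∀ t ∈ Finset.Icc 2 T,
        ⟪(1 / ((t : ℝ) - 1)) • ∑ τ ∈ Finset.Icc 1 (t - 1), v τ, v t⟫ ≤ ε t) →
      ‖∑ τ ∈ Finset.Icc 1 T, v τ‖ ^ 2 ≤
        (T : ℝ) * B ^ 2 + 2 * ∑ t ∈ Finset.Icc 2 T, ((t : ℝ) - 1) * ε t := by
  intro T
  induction T with
  | zero => intro _ _ _; simp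
  | succ T ih =>
    intro hB hε h
    have hsub : Finset.Icc 1 T ⊆ Finset.Icc 1 (T + 1) := Finset.Icc_subset_Icc_right (by omega)
    have hsub2 : Finset.Icc 2 T ⊆ Finset.Icc 2 (T + 1) := Finset.Icc_subset_Icc_right (by omega)
    have IH := ih (fun t ht => hB t (hsub ht)) (fun t ht => hε t (hsub2 ht))
        (fun t ht => h t (hsub2 ht))
    have hsum : ∑ τ ∈ Finset.Icc 1 (T + 1), v τ
        = (∑ τ ∈ Finset.Icc 1 T, v τ) + v (T + 1) :=
      Finset.sum_Icc_succ_top (by omega) v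
    have hsumε : ∑ t ∈ Finset.Icc 2 (T + 1), ((t : ℝ) - 1) * ε t
        = (∑ t ∈ Finset.Icc 2 T, ((t : ℝ) - 1) * ε t) + ((T + 1 : ℝ) - 1) * ε (T + 1) := by
      rcases Nat.eq_zero_or_pos T with hT | hT
      · subst hT; simp
      · rw [Finset.sum_Icc_succ_top (show 2 ≤ T + 1 by omega)]
        push_cast; ring
    have hnv : ‖v (T + 1)‖ ≤ B := hB _ (by simp)
    have hinner : ⟪∑ τ ∈ Finset.Icc 1 T, v τ, v (T + 1)⟫ ≤ (T : ℝ) * ε (T + 1) := by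
      rcases Nat.eq_zero_or_pos T with hT | hT
      · subst hT; simp
      · have hmem : T + 1 ∈ Finset.Icc 2 (T + 1) := by simp; omega
        have := h (T + 1) hmem
        simp only [Nat.add_sub_cancel] at this
        rw [real_inner_smul_left] at this
        push_cast at this ⊢
        have hTpos : (0 : ℝ) < T := by exact_mod_cast hT
        have h1 : ((T : ℝ) + 1 - 1) = T := by ring
        rw [h1] at this
        calc ⟪∑ τ ∈ Finset.Icc 1 T, v τ, v (T + 1)⟫
            = (T : ℝ) * (1 / (T : ℝ) * ⟪∑ τ ∈ Finset.Icc 1 T, v τ, v (T + 1)⟫) := by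
              field_simp
          _ ≤ (T : ℝ) * ε (T + 1) := by
              apply mul_le_mul_of_nonneg_left this hTpos.le
    rw [hsum, hsumε]
    have hexp : ‖(∑ τ ∈ Finset.Icc 1 T, v τ) + v (T + 1)‖ ^ 2
        = ‖∑ τ ∈ Finset.Icc 1 T, v τ‖ ^ 2 + 2 * ⟪∑ τ ∈ Finset.Icc 1 T, v τ, v (T + 1)⟫
          + ‖v (T + 1)‖ ^ 2 := norm_add_sq_real _ _
    have hv2 : ‖v (T + 1)‖ ^ 2 ≤ B ^ 2 := by
      apply sq_le_sq' _ hnv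
      linarith [norm_nonneg (v (T + 1))]
    rw [hexp]
    push_cast
    nlinarith [IH, hinner, hv2]

theorem approx_pythagorean_lemma (d T : ℕ) (B : ℝ) (v : ℕ → EuclideanSpace ℝ (Fin d))
    (ε : ℕ → ℝ)
    (hB : ∀ t ∈ Finset.Icc 1 T, ‖v t‖ ≤ B)
    (hε : ∀ t ∈ Finset.Icc 2 T, 0 ≤ ε t)
    (h : ∀ t ∈ Finset.Icc 2 T,
      ⟪(1 / ((t : ℝ) - 1)) • ∑ τ ∈ Finset.Icc 1 (t - 1), v τ, v t⟫ ≤ ε t) :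
    ‖∑ τ ∈ Finset.Icc 1 T, v τ‖ ≤
      Real.sqrt ((T : ℝ) * B ^ 2 + 2 * ∑ t ∈ Finset.Icc 2 T, ((t : ℝ) - 1) * ε t) := by
  have key := approx_pyth_sq d B v ε T hB hε h
  exact (Real.le_sqrt (norm_nonneg _) ((sq_nonneg _).trans key)).mpr key
end

section
/- Let $\mathcal{P} \subset \mathbb{R}^d$ be a convex body containing the Euclidean unit ball $B_2$, and suppose there exist points $\xi_1,\dots,\xi_m \in \partial \mathcal{P} \cap \partial B_2$ (so $\|\xi_i\|_2 = 1$ and $\langle p, \xi_i\rangle \le 1$ for all $p \in \mathcal{P}$) and weights $c_1,\dots,c_m > 0$ with $\sum_i c_i \xi_i \xi_i^\top = I_d$ and $\sum_i c_i \xi_i = 0$ (John's decomposition). If $\phi(p) = Mp + a$ is an affine map with $\phi(\mathcal{P}) \subseteq \mathcal{P}$, then $\|M\|_F \le \sqrt{d + \|a\|_2^2}$. -/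
noncomputable def eunorm {d : ℕ} (v : Fin d → ℝ) : ℝ := Real.sqrt (∑ i, v i ^ 2)
def dotp {d : ℕ} (x y : Fin d → ℝ) : ℝ := ∑ i, x i * y i
noncomputable def frob {d : ℕ} (M : Matrix (Fin d) (Fin d) ℝ) : ℝ :=
  Real.sqrt (∑ i, ∑ j, M i j ^ 2)

theorem frobenius_bound_john (d m : ℕ) (P : Set (Fin d → ℝ))
    (hconv : Convex ℝ P) (hcomp : IsCompact P) (hint : (interior P).Nonempty)
    (hball : {v : Fin d → ℝ | eunorm v ≤ 1} ⊆ P)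
    (ξ : Fin m → Fin d → ℝ) (c : Fin m → ℝ)
    (hξnorm : ∀ i, eunorm (ξ i) = 1)
    (hsupp : ∀ i, ∀ p ∈ P, dotp p (ξ i) ≤ 1)
    (hc : ∀ i, 0 < c i)
    (hdecomp1 : ∑ i, c i • Matrix.vecMulVec (ξ i) (ξ i) = (1 : Matrix (Fin d) (Fin d) ℝ))
    (hdecomp2 : ∑ i, c i • ξ i = 0)
    (M : Matrix (Fin d) (Fin d) ℝ) (a : Fin d → ℝ)
    (hphi : ∀ p ∈ P, M.mulVec p + a ∈ P) :
    frob M ≤ Real.sqrt ((d : ℝ) + (eunorm a) ^ 2) := by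
  -- entrywise versions of the decomposition hypotheses
  have hA : ∀ k l, ∑ i, c i * (ξ i k * ξ i l) = if k = l then (1:ℝ) else 0 := by
    intro k l
    have := congrFun (congrFun hdecomp1 k) l
    simpa [Matrix.sum_apply, Matrix.vecMulVec_apply, Matrix.one_apply] using this
  have hB : ∀ k, ∑ i, c i * ξ i k = 0 := by
    intro k
    have := congrFun hdecomp2 k
    simpa [Finset.sum_apply] using this
  have hξsq : ∀ i, ∑ k, ξ i k ^ 2 = 1 := by
    intro i
    have h := hξnorm i
    have hnn : (0:ℝ) ≤ ∑ k, ξ i k ^ 2 :=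
      Finset.sum_nonneg fun k _ => sq_nonneg _
    rw [eunorm, Real.sqrt_eq_one] at h
    exact h
  -- key quadratic identity
  have hC : ∀ x : Fin d → ℝ, ∑ i, c i * (∑ k, x k * ξ i k) ^ 2 = ∑ k, x k ^ 2 := by
    intro x
    calc ∑ i, c i * (∑ k, x k * ξ i k) ^ 2
        = ∑ i, ∑ k, ∑ l, x k * x l * (c i * (ξ i k * ξ i l)) := by
          refine Finset.sum_congr rfl fun i _ => ?_
          rw [sq, Finset.sum_mul_sum, Finset.mul_sum]
          refine Finset.sum_congr rfl fun k _ => ?_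
          rw [Finset.mul_sum]
          exact Finset.sum_congr rfl fun l _ => by ring
      _ = ∑ k, ∑ l, x k * x l * ∑ i, c i * (ξ i k * ξ i l) := by
          rw [Finset.sum_comm]
          refine Finset.sum_congr rfl fun k _ => ?_
          rw [Finset.sum_comm]
          refine Finset.sum_congr rfl fun l _ => ?_
          rw [Finset.mul_sum]
      _ = ∑ k, x k ^ 2 := by
          refine Finset.sum_congr rfl fun k _ => ?_
          rw [Finset.sum_eq_single k]
          · rw [hA k k]; simp [sq]
          · intro l _ hl
            rw [hA k l, if_neg (Ne.symm hl)]; ring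
          · intro h; exact absurd (Finset.mem_univ k) h
  -- sum of weights is d
  have hsumc : ∑ i, c i = (d:ℝ) := by
    have : ∑ k : Fin d, ∑ i, c i * (ξ i k * ξ i k) = ∑ k : Fin d, (1:ℝ) := by
      refine Finset.sum_congr rfl fun k _ => ?_
      rw [hA k k, if_pos rfl]
    rw [Finset.sum_comm] at this
    simp only [Finset.sum_const, Finset.card_univ, Fintype.card_fin, nsmul_eq_mul,
      mul_one] at this
    calc ∑ i, c i = ∑ i, c i * ∑ k, ξ i k ^ 2 := by
          refine Finset.sum_congr rfl fun i _ => ?_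
          rw [hξsq i, mul_one]
      _ = (d:ℝ) := by
          rw [← this]
          refine Finset.sum_congr rfl fun i _ => ?_
          rw [Finset.mul_sum]
          exact Finset.sum_congr rfl fun k _ => by ring
  -- a ∈ P
  have h0P : (0 : Fin d → ℝ) ∈ P := hball (by simp [eunorm])
  have haP : a ∈ P := by
    have := hphi 0 h0P
    simpa [Matrix.mulVec_zero] using this
  -- per contact point bound
  have hkey : ∀ i, ∑ k, (∑ j, M j k * ξ i j) ^ 2 ≤ (1 - dotp a (ξ i)) ^ 2 := by
    intro i
    set g : Fin d → ℝ := fun k => ∑ j, M j k * ξ i j with hg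
    set S : ℝ := ∑ k, g k ^ 2 with hS
    have hSnn : 0 ≤ S := Finset.sum_nonneg fun k _ => sq_nonneg _
    have hai : dotp a (ξ i) ≤ 1 := hsupp i a haP
    have hr : Real.sqrt S ≤ 1 - dotp a (ξ i) := by
      rcases eq_or_lt_of_le hSnn with h0 | hpos
      · rw [← h0, Real.sqrt_zero]; linarith
      · set r := Real.sqrt S with hrdef
        have hrpos : 0 < r := Real.sqrt_pos.mpr hpos
        have hr2 : r ^ 2 = S := Real.sq_sqrt hSnn
        set p : Fin d → ℝ := fun k => g k / r with hp
        have hpP : p ∈ P := by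
          apply hball
          show eunorm p ≤ 1
          have : eunorm p = 1 := by
            rw [eunorm]
            have : ∑ k, p k ^ 2 = 1 := by
              simp only [hp, div_pow]
              rw [← Finset.sum_div, ← hS, hr2, div_self (ne_of_gt hpos)]
            rw [this, Real.sqrt_one]
          linarith [this.le]
        have hq := hsupp i _ (hphi p hpP)
        have hcomp : dotp (M.mulVec p + a) (ξ i) = r + dotp a (ξ i) := by
          simp only [dotp, Pi.add_apply, add_mul, Finset.sum_add_distrib]
          congr 1
          have h1 : ∑ k, M.mulVec p k * ξ i k = ∑ l, p l * g l := by
            simp only [Matrix.mulVec, dotProduct, Finset.sum_mul]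
            rw [Finset.sum_comm]
            refine Finset.sum_congr rfl fun l _ => ?_
            rw [hg, Finset.mul_sum]
            exact Finset.sum_congr rfl fun k _ => by ring
          rw [h1]
          have h2 : ∑ l, p l * g l = S / r := by
            rw [hS, Finset.sum_div]
            refine Finset.sum_congr rfl fun l _ => ?_
            simp only [hp]
            rw [sq]; ring
          rw [h2, ← hr2, sq, mul_div_assoc, div_self (ne_of_gt hrpos), mul_one]
        rw [hcomp] at hq
        linarith
    calc S = Real.sqrt S ^ 2 := (Real.sq_sqrt hSnn).symm
      _ ≤ (1 - dotp a (ξ i)) ^ 2 := by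
          apply pow_le_pow_left₀ (Real.sqrt_nonneg _) hr
  -- assemble
  have hCa : ∑ i, c i * (dotp a (ξ i)) ^ 2 = ∑ k, a k ^ 2 := hC a
  have hBa : ∑ i, c i * dotp a (ξ i) = 0 := by
    calc ∑ i, c i * dotp a (ξ i) = ∑ i, ∑ k, a k * (c i * ξ i k) := by
          refine Finset.sum_congr rfl fun i _ => ?_
          rw [dotp, Finset.mul_sum]
          exact Finset.sum_congr rfl fun k _ => by ring
      _ = ∑ k, a k * ∑ i, c i * ξ i k := by
          rw [Finset.sum_comm]
          exact Finset.sum_congr rfl fun k _ => by rw [Finset.mul_sum]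
      _ = 0 := by
          refine Finset.sum_eq_zero fun k _ => ?_
          rw [hB k, mul_zero]
  have hF : ∑ j, ∑ k, M j k ^ 2 = ∑ i, c i * ∑ k, (∑ j, M j k * ξ i j) ^ 2 := by
    calc ∑ j, ∑ k, M j k ^ 2 = ∑ k, ∑ j, M j k ^ 2 := Finset.sum_comm
      _ = ∑ k, ∑ i, c i * (∑ j, M j k * ξ i j) ^ 2 := by
          exact Finset.sum_congr rfl fun k _ => (hC (fun j => M j k)).symm
      _ = ∑ i, ∑ k, c i * (∑ j, M j k * ξ i j) ^ 2 := Finset.sum_comm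
      _ = ∑ i, c i * ∑ k, (∑ j, M j k * ξ i j) ^ 2 := by
          exact Finset.sum_congr rfl fun i _ => (Finset.mul_sum _ _ _).symm
  have hmain : ∑ j, ∑ k, M j k ^ 2 ≤ (d : ℝ) + ∑ k, a k ^ 2 := by
    rw [hF]
    calc ∑ i, c i * ∑ k, (∑ j, M j k * ξ i j) ^ 2
        ≤ ∑ i, c i * (1 - dotp a (ξ i)) ^ 2 := by
          refine Finset.sum_le_sum fun i _ => ?_
          exact mul_le_mul_of_nonneg_left (hkey i) (hc i).le
      _ = ∑ i, (c i - 2 * (c i * dotp a (ξ i)) + c i * (dotp a (ξ i)) ^ 2) := by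
          exact Finset.sum_congr rfl fun i _ => by ring
      _ = (d : ℝ) + ∑ k, a k ^ 2 := by
          rw [Finset.sum_add_distrib, Finset.sum_sub_distrib, hCa, ← Finset.mul_sum,
            hBa, hsumc]
          ring
  have hea : eunorm a ^ 2 = ∑ k, a k ^ 2 :=
    Real.sq_sqrt (Finset.sum_nonneg fun k _ => sq_nonneg _)
  rw [frob, hea]
  exact Real.sqrt_le_sqrt hmain
end

section
/- Let $\mathcal{P} \subset \mathbb{R}^d$ be a centrally symmetric convex body in John's position (i.e., $B_2 \subseteq \mathcal{P} \subseteq \sqrt{d} B_2$ and John's decomposition holds with contact points as in John's theorem). If $\phi(p) = Mp + a$ is an affine endomorphism of $\mathcal{P}$, then $\|a\|_2 \le \sqrt{d}$ and $\|M\|_F \le \sqrt{2d}$. -/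
lemma eunorm_smul {d : ℕ} (t : ℝ) (ht : 0 ≤ t) (v : Fin d → ℝ) :
    eunorm (t • v) = t * eunorm v := by
  unfold eunorm
  have h : (∑ i, (t • v) i ^ 2) = t ^ 2 * ∑ i, v i ^ 2 := by
    rw [Finset.mul_sum]
    refine Finset.sum_congr rfl fun i _ => ?_
    simp [smul_eq_mul]; ring
  rw [h, Real.sqrt_mul (sq_nonneg t), Real.sqrt_sq ht]

lemma eunorm_neg {d : ℕ} (v : Fin d → ℝ) : eunorm (-v) = eunorm v := by
  unfold eunorm; simp

theorem frobenius_bound_symmetric (d m : ℕ) (P : Set (Fin d → ℝ))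
    (hconv : Convex ℝ P) (hcomp : IsCompact P) (hint : (interior P).Nonempty)
    (hsym : ∀ p ∈ P, -p ∈ P)
    (hball : {v : Fin d → ℝ | eunorm v ≤ 1} ⊆ P)
    (hout : P ⊆ {v : Fin d → ℝ | eunorm v ≤ Real.sqrt d})
    (ξ : Fin m → Fin d → ℝ) (c : Fin m → ℝ)
    (hξnorm : ∀ i, eunorm (ξ i) = 1)
    (hsupp : ∀ i, ∀ p ∈ P, dotp p (ξ i) ≤ 1)
    (hc : ∀ i, 0 < c i)
    (hdecomp1 : ∑ i, c i • Matrix.vecMulVec (ξ i) (ξ i) = (1 : Matrix (Fin d) (Fin d) ℝ))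
    (hdecomp2 : ∑ i, c i • ξ i = 0)
    (M : Matrix (Fin d) (Fin d) ℝ) (a : Fin d → ℝ)
    (hphi : ∀ p ∈ P, M.mulVec p + a ∈ P) :
    eunorm a ≤ Real.sqrt d ∧ frob M ≤ Real.sqrt (2 * d) := by
  -- 0 ∈ P
  have h0P : (0 : Fin d → ℝ) ∈ P := by
    apply hball; simp [Set.mem_setOf_eq, eunorm]
  -- a ∈ P
  have haP : a ∈ P := by
    have := hphi 0 h0P
    simpa using this
  have ha : eunorm a ≤ Real.sqrt d := hout haP
  refine ⟨ha, ?_⟩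
  -- entrywise decomposition
  have hdec : ∀ i l : Fin d, (∑ j, c j * (ξ j i * ξ j l)) = if i = l then (1:ℝ) else 0 := by
    intro i l
    have := congrFun (congrFun hdecomp1 i) l
    simpa [Matrix.sum_apply, Matrix.vecMulVec_apply, Matrix.one_apply] using this
  -- norms of contact points
  have hξ2 : ∀ j, (∑ i, ξ j i ^ 2) = 1 := by
    intro j
    have h := hξnorm j
    unfold eunorm at h
    have hnn : (0:ℝ) ≤ ∑ i, ξ j i ^ 2 := Finset.sum_nonneg fun i _ => sq_nonneg _
    nlinarith [Real.sq_sqrt hnn]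
  -- sum of weights = d
  have hcsum : (∑ j, c j) = (d : ℝ) := by
    have h1 : (∑ j, c j) = ∑ i : Fin d, ∑ j, c j * (ξ j i * ξ j i) := by
      rw [Finset.sum_comm]
      refine Finset.sum_congr rfl fun j _ => ?_
      rw [← Finset.mul_sum]
      have h2 : (∑ i, ξ j i * ξ j i) = ∑ i, ξ j i ^ 2 :=
        Finset.sum_congr rfl fun i _ => by ring
      rw [h2, hξ2 j, mul_one]
    rw [h1]
    simp [hdec]
  set w : Fin m → Fin d → ℝ := fun j => Matrix.vecMul (ξ j) M with hw
  -- dot product identity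
  have hdotw : ∀ (z : Fin d → ℝ) (j : Fin m),
      dotp (M.mulVec z) (ξ j) = dotp z (w j) := by
    intro z j
    simp only [dotp, hw, Matrix.mulVec, Matrix.vecMul, dotProduct,
      Finset.sum_mul, Finset.mul_sum]
    rw [Finset.sum_comm]
    exact Finset.sum_congr rfl fun k _ => Finset.sum_congr rfl fun i _ => by ring
  -- additivity of dotp
  have hdadd : ∀ (x y v : Fin d → ℝ), dotp (x + y) v = dotp x v + dotp y v := by
    intro x y v
    simp [dotp, add_mul, Finset.sum_add_distrib]
  have hdneg : ∀ (x v : Fin d → ℝ), dotp (-x) v = - dotp x v := by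
    intro x v; simp [dotp]
  -- key bound: for unit z, dotp z (w j) ≤ 1
  have hkey : ∀ (z : Fin d → ℝ), eunorm z ≤ 1 → ∀ j, dotp z (w j) ≤ 1 := by
    intro z hz j
    have hzP : z ∈ P := hball hz
    have hznP : -z ∈ P := hball (by rw [Set.mem_setOf_eq, eunorm_neg]; exact hz)
    have h1 : dotp (M.mulVec z + a) (ξ j) ≤ 1 := hsupp j _ (hphi z hzP)
    have h2' : M.mulVec z + (-a) ∈ P := by
      have := hsym _ (hphi (-z) hznP)
      have e : -(M.mulVec (-z) + a) = M.mulVec z + (-a) := by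
        rw [Matrix.mulVec_neg]; abel
      rwa [e] at this
    have h2 : dotp (M.mulVec z + (-a)) (ξ j) ≤ 1 := hsupp j _ h2'
    rw [hdadd, hdotw] at h1
    rw [hdadd, hdotw, hdneg] at h2
    linarith
  -- hence ∑ (w j k)^2 ≤ 1
  have hwle : ∀ j, (∑ k, w j k ^ 2) ≤ 1 := by
    intro j
    set s : ℝ := ∑ k, w j k ^ 2 with hs
    have hsnn : 0 ≤ s := Finset.sum_nonneg fun k _ => sq_nonneg _
    rcases eq_or_lt_of_le hsnn with h | h
    · simp [← h]
    · set t : ℝ := (Real.sqrt s)⁻¹ with htdef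
      have hst : 0 < Real.sqrt s := Real.sqrt_pos.mpr h
      have htnn : 0 ≤ t := le_of_lt (inv_pos.mpr hst)
      have hnw : eunorm (w j) = Real.sqrt s := by unfold eunorm; rw [← hs]
      have hzn : eunorm (t • w j) ≤ 1 := by
        rw [eunorm_smul t htnn, hnw, htdef, inv_mul_cancel₀ (ne_of_gt hst)]
      have hd : dotp (t • w j) (w j) = t * s := by
        simp only [dotp, Pi.smul_apply, smul_eq_mul, hs, Finset.mul_sum]
        exact Finset.sum_congr rfl fun k _ => by ring
      have hb := hkey _ hzn j
      rw [hd] at hb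
      have hts : t * s = Real.sqrt s := by
        rw [htdef, inv_mul_eq_div, ← Real.sqrt_mul_self (le_of_lt hst)]
        field_simp
        rw [Real.sqrt_sq (le_of_lt hst), Real.sq_sqrt hsnn]
      rw [hts] at hb
      nlinarith [Real.sq_sqrt hsnn]
  -- Frobenius identity
  have hfro : (∑ i, ∑ k, M i k ^ 2) = ∑ j, c j * ∑ k, w j k ^ 2 := by
    have expand : ∀ j, (c j * ∑ k, w j k ^ 2)
        = ∑ i, ∑ l, (c j * (ξ j i * ξ j l)) * (∑ k, M i k * M l k) := by
      intro j
      have hterm : ∀ k, w j k ^ 2 = ∑ i, ∑ l, (ξ j i * M i k) * (ξ j l * M l k) := by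
        intro k
        rw [sq]
        simp only [hw, Matrix.vecMul, dotProduct]
        rw [Finset.sum_mul_sum]
      simp only [hterm, Finset.mul_sum]
      rw [Finset.sum_comm]
      refine Finset.sum_congr rfl fun i _ => ?_
      rw [Finset.sum_comm]
      exact Finset.sum_congr rfl fun l _ => Finset.sum_congr rfl fun k _ => by ring
    calc (∑ i, ∑ k, M i k ^ 2)
        = ∑ i, ∑ l, (if i = l then (1:ℝ) else 0) * (∑ k, M i k * M l k) := by
          refine Finset.sum_congr rfl fun i _ => ?_
          simp only [ite_mul, one_mul, zero_mul, Finset.sum_ite_eq, Finset.mem_univ,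
            if_true]
          exact Finset.sum_congr rfl fun k _ => by ring
      _ = ∑ i, ∑ l, (∑ j, c j * (ξ j i * ξ j l)) * (∑ k, M i k * M l k) := by
          simp only [hdec]
      _ = ∑ i, ∑ l, ∑ j, (c j * (ξ j i * ξ j l)) * (∑ k, M i k * M l k) :=
          Finset.sum_congr rfl fun i _ => Finset.sum_congr rfl fun l _ => by
            rw [Finset.sum_mul]
      _ = ∑ i, ∑ j, ∑ l, (c j * (ξ j i * ξ j l)) * (∑ k, M i k * M l k) :=
          Finset.sum_congr rfl fun i _ => Finset.sum_comm
      _ = ∑ j, ∑ i, ∑ l, (c j * (ξ j i * ξ j l)) * (∑ k, M i k * M l k) :=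
          Finset.sum_comm
      _ = ∑ j, c j * ∑ k, w j k ^ 2 :=
          Finset.sum_congr rfl fun j _ => (expand j).symm
  -- conclude
  have hsumle : (∑ j, c j * ∑ k, w j k ^ 2) ≤ ∑ j, c j :=
    Finset.sum_le_sum fun j _ => by nlinarith [hc j, hwle j]
  have hdnn : (0:ℝ) ≤ (d:ℝ) := Nat.cast_nonneg d
  have hb : (∑ i, ∑ k, M i k ^ 2) ≤ 2 * d := by
    rw [hfro]; rw [hcsum] at hsumle; linarith
  unfold frob
  exact Real.sqrt_le_sqrt hb
end

section
/- For every $d \ge 2$ there exists a convex set $\mathcal{P} \subset \mathbb{R}^d$ with $B_2 \subseteq \mathcal{P} \subseteq \sqrt{d} B_2$ and a linear map $M$ with $M(\mathcal{P}) \subseteq \mathcal{P}$ such that $\|M\|_F^2 \ge d \lfloor d/2 \rfloor$. -/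
theorem lopsided_ellipsoid (d : ℕ) (hd : 2 ≤ d) :
    ∃ P : Set (Fin d → ℝ), Convex ℝ P ∧
      {v : Fin d → ℝ | eunorm v ≤ 1} ⊆ P ∧
      P ⊆ {v : Fin d → ℝ | eunorm v ≤ Real.sqrt d} ∧
      ∃ M : Matrix (Fin d) (Fin d) ℝ,
        (∀ p ∈ P, M.mulVec p ∈ P) ∧ (frob M) ^ 2 ≥ (d : ℝ) * ((d / 2 : ℕ) : ℝ) := by
  set k := d / 2 with hkdef
  have hk1 : 1 ≤ k := by omega
  have hk2 : 2 * k ≤ d := by omega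
  have hkd : k < d := by omega
  have hd1 : (1 : ℝ) ≤ Real.sqrt d := by
    rw [show (1:ℝ) = Real.sqrt 1 by simp]
    exact Real.sqrt_le_sqrt (by exact_mod_cast Nat.one_le_of_lt hd)
  set a : Fin d → ℝ := fun i => if (i : ℕ) < k then Real.sqrt d else 1 with ha_def
  have ha1 : ∀ i, 1 ≤ a i := by
    intro i; simp only [ha_def]; split
    · exact hd1
    · exact le_refl 1
  have ha0 : ∀ i, 0 < a i := fun i => lt_of_lt_of_le one_pos (ha1 i)
  have had : ∀ i, a i ^ 2 ≤ (d : ℝ) := by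
    intro i; simp only [ha_def]; split
    · rw [Real.sq_sqrt (by positivity)]
    · have : (1:ℝ) ≤ d := by exact_mod_cast Nat.one_le_of_lt hd
      nlinarith
  refine ⟨{v : Fin d → ℝ | ∑ i, (v i / a i) ^ 2 ≤ 1}, ?_, ?_, ?_, ?_⟩
  · -- convex
    intro x hx y hy s t hs ht hst
    simp only [Set.mem_setOf_eq] at hx hy ⊢
    calc ∑ i, ((s • x + t • y) i / a i) ^ 2
        = ∑ i, (s • (x i / a i) + t • (y i / a i)) ^ 2 := by
          refine Finset.sum_congr rfl fun i _ => ?_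
          simp only [Pi.add_apply, Pi.smul_apply, smul_eq_mul]
          ring
      _ ≤ ∑ i, (s • (x i / a i) ^ 2 + t • (y i / a i) ^ 2) := by
          refine Finset.sum_le_sum fun i _ => ?_
          exact (Even.convexOn_pow even_two).2 (Set.mem_univ _) (Set.mem_univ _) hs ht hst
      _ = s * ∑ i, (x i / a i) ^ 2 + t * ∑ i, (y i / a i) ^ 2 := by
          simp [Finset.sum_add_distrib, Finset.mul_sum, smul_eq_mul]
      _ ≤ s * 1 + t * 1 := by
          exact add_le_add (mul_le_mul_of_nonneg_left hx hs)
            (mul_le_mul_of_nonneg_left hy ht)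
      _ = 1 := by linarith
  · -- ball ⊆ P
    intro v hv
    simp only [Set.mem_setOf_eq, eunorm] at hv ⊢
    have h0 : 0 ≤ ∑ i, v i ^ 2 := Finset.sum_nonneg fun i _ => sq_nonneg _
    have hs : ∑ i, v i ^ 2 ≤ 1 := by
      calc ∑ i, v i ^ 2 = Real.sqrt (∑ i, v i ^ 2) ^ 2 := (Real.sq_sqrt h0).symm
        _ ≤ 1 ^ 2 := pow_le_pow_left₀ (Real.sqrt_nonneg _) hv 2
        _ = 1 := one_pow 2
    refine le_trans (Finset.sum_le_sum fun i _ => ?_) hs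
    rw [div_pow]
    have h1 : (1:ℝ) ≤ a i ^ 2 := by nlinarith [ha1 i]
    exact div_le_self (sq_nonneg _) h1
  · -- P ⊆ √d ball
    intro v hv
    simp only [Set.mem_setOf_eq, eunorm] at hv ⊢
    have hs : ∑ i, v i ^ 2 ≤ (d : ℝ) := by
      calc ∑ i, v i ^ 2 = ∑ i, a i ^ 2 * (v i / a i) ^ 2 := by
            refine Finset.sum_congr rfl fun i _ => ?_
            have := (ha0 i).ne'
            field_simp
        _ ≤ ∑ i, (d : ℝ) * (v i / a i) ^ 2 :=
            Finset.sum_le_sum fun i _ => mul_le_mul_of_nonneg_right (had i) (sq_nonneg _)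
        _ = (d : ℝ) * ∑ i, (v i / a i) ^ 2 := (Finset.mul_sum _ _ _).symm
        _ ≤ (d : ℝ) * 1 := mul_le_mul_of_nonneg_left hv (by positivity)
        _ = d := mul_one _
    exact Real.sqrt_le_sqrt hs
  · -- the matrix
    set σ : Fin d → Fin d := fun i =>
      if h : (i : ℕ) < k then ⟨(i : ℕ) + k, by omega⟩
      else if h2 : (i : ℕ) < 2 * k then ⟨(i : ℕ) - k, by omega⟩ else i with hσ_def
    have hσval : ∀ i : Fin d, (σ i : ℕ) =
        if (i : ℕ) < k then (i : ℕ) + k else if (i : ℕ) < 2 * k then (i : ℕ) - k else i := by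
      intro i; simp only [hσ_def]; split_ifs <;> rfl
    have hσσ : Function.Involutive σ := by
      intro i
      have hi := i.isLt
      apply Fin.ext
      rw [hσval, hσval]
      split_ifs <;> omega
    have hbij : Function.Bijective σ := hσσ.bijective
    set M : Matrix (Fin d) (Fin d) ℝ :=
      Matrix.of (fun i j => if j = σ i then a i / a j else 0) with hM_def
    have hMv : ∀ (p : Fin d → ℝ) (i : Fin d),
        M.mulVec p i = a i / a (σ i) * p (σ i) := by
      intro p i
      simp only [Matrix.mulVec, dotProduct, hM_def, Matrix.of_apply]
      rw [Finset.sum_eq_single (σ i)]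
      · simp
      · intro b _ hb; simp [hb]
      · simp
    have hrow : ∀ i, ∑ j, M i j ^ 2 = (a i / a (σ i)) ^ 2 := by
      intro i
      rw [Finset.sum_eq_single (σ i)]
      · simp [hM_def]
      · intro b _ hb; simp [hM_def, hb]
      · simp
    refine ⟨M, ?_, ?_⟩
    · intro p hp
      simp only [Set.mem_setOf_eq] at hp ⊢
      have heq : ∀ i, (M.mulVec p i / a i) ^ 2 = (p (σ i) / a (σ i)) ^ 2 := by
        intro i
        rw [hMv]
        have h1 := (ha0 i).ne'
        have h2 := (ha0 (σ i)).ne'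
        field_simp
      calc ∑ i, (M.mulVec p i / a i) ^ 2 = ∑ i, (p (σ i) / a (σ i)) ^ 2 :=
            Finset.sum_congr rfl fun i _ => heq i
        _ = ∑ j, (p j / a j) ^ 2 := hbij.sum_comp fun j => (p j / a j) ^ 2
        _ ≤ 1 := hp
    · -- Frobenius bound
      have hterm : ∀ i : Fin d, (i : ℕ) < k → (a i / a (σ i)) ^ 2 = (d : ℝ) := by
        intro i hik
        have h1 : a i = Real.sqrt d := if_pos hik
        have h2 : a (σ i) = 1 := by
          have hσi : ¬ ((σ i : ℕ) < k) := by rw [hσval, if_pos hik]; omega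
          exact if_neg hσi
        rw [h1, h2, div_one, Real.sq_sqrt (by positivity)]
      have hfilter : (Finset.univ.filter (fun i : Fin d => (i : ℕ) < k))
          = Finset.Iio (⟨k, hkd⟩ : Fin d) := by
        ext i; simp [Fin.lt_def]
      have hsum1 : ∑ i ∈ Finset.univ.filter (fun i : Fin d => (i : ℕ) < k),
          (a i / a (σ i)) ^ 2 = (k : ℝ) * d := by
        rw [Finset.sum_congr rfl (fun i hi => hterm i (by simpa using hi)),
          Finset.sum_const, hfilter, Fin.card_Iio]
        simp [nsmul_eq_mul]
      have hS0 : 0 ≤ ∑ i, ∑ j, M i j ^ 2 :=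
        Finset.sum_nonneg fun i _ => Finset.sum_nonneg fun j _ => sq_nonneg _
      have hSge : (d : ℝ) * k ≤ ∑ i, ∑ j, M i j ^ 2 := by
        calc (d : ℝ) * k = (k : ℝ) * d := by ring
          _ = ∑ i ∈ Finset.univ.filter (fun i : Fin d => (i : ℕ) < k),
              (a i / a (σ i)) ^ 2 := hsum1.symm
          _ ≤ ∑ i, (a i / a (σ i)) ^ 2 :=
              Finset.sum_le_sum_of_subset_of_nonneg (Finset.filter_subset _ _)
                (fun i _ _ => sq_nonneg _)
          _ = ∑ i, ∑ j, M i j ^ 2 := (Finset.sum_congr rfl fun i _ => hrow i).symm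
      calc (frob M) ^ 2 = ∑ i, ∑ j, M i j ^ 2 := Real.sq_sqrt hS0
        _ ≥ (d : ℝ) * k := hSge
end

section
/- Let $\mathcal{P}, \mathcal{L} \subset \mathbb{R}^d$ be compact convex sets, $b: \mathcal{L} \to \mathcal{P}$ a best-response map with $b(\ell) \in \arg\min_{p \in \mathcal{P}} \langle \ell, p\rangle$, and $\mathcal{S} = \mathrm{conv}\{(\ell \otimes b(\ell), \ell) : \ell \in \mathcal{L}\}$. Then for every $s \in \mathcal{S}$ and every affine endomorphism $\phi = (M, a)$ of $\mathcal{P}$, $\langle (I_d, 0) - (M, a), s\rangle \le 0$, where the pairing is component-wise: $\langle (M,a), (\ell \otimes p, \ell)\rangle = \langle \ell, Mp\rangle + \langle \ell, a\rangle$. -/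
theorem target_set_nonpositive (d : ℕ) (P L : Set (Fin d → ℝ))
    (hPconv : Convex ℝ P) (hPcomp : IsCompact P)
    (hLconv : Convex ℝ L) (hLcomp : IsCompact L)
    (b : (Fin d → ℝ) → (Fin d → ℝ))
    (hb : ∀ l ∈ L, b l ∈ P ∧ ∀ p ∈ P, dotp l (b l) ≤ dotp l p) :
    ∀ s ∈ convexHull ℝ {x : Matrix (Fin d) (Fin d) ℝ × (Fin d → ℝ) |
        ∃ l ∈ L, x = (Matrix.vecMulVec l (b l), l)},
      ∀ (M : Matrix (Fin d) (Fin d) ℝ) (a : Fin d → ℝ),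
        (∀ p ∈ P, M.mulVec p + a ∈ P) →
        (∑ i, ∑ j, ((1 : Matrix (Fin d) (Fin d) ℝ) i j - M i j) * s.1 i j) +
          dotp (0 - a) s.2 ≤ 0 := by
  intro s hs M a hMa
  set f : (Matrix (Fin d) (Fin d) ℝ × (Fin d → ℝ)) → ℝ := fun z =>
    (∑ i, ∑ j, ((1 : Matrix (Fin d) (Fin d) ℝ) i j - M i j) * z.1 i j) +
      dotp (0 - a) z.2 with hf
  have hlin : IsLinearMap ℝ f := by
    constructor
    · intro x y
      simp [hf, dotp, mul_add, Finset.sum_add_distrib]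
      ring
    · intro c x
      simp only [hf, dotp, Prod.fst, Prod.snd, Prod.smul_fst, Prod.smul_snd,
        Matrix.smul_apply, Pi.smul_apply, smul_eq_mul, Pi.sub_apply, Pi.zero_apply]
      rw [mul_add, Finset.mul_sum, Finset.mul_sum]
      congr 1
      · apply Finset.sum_congr rfl; intro i _
        rw [Finset.mul_sum]; apply Finset.sum_congr rfl; intro j _; ring
      · apply Finset.sum_congr rfl; intro i _; ring
  have hconv : Convex ℝ {z : Matrix (Fin d) (Fin d) ℝ × (Fin d → ℝ) | f z ≤ 0} :=
    convex_halfSpace_le hlin 0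
  have hsub : {x : Matrix (Fin d) (Fin d) ℝ × (Fin d → ℝ) |
      ∃ l ∈ L, x = (Matrix.vecMulVec l (b l), l)} ⊆
      {z : Matrix (Fin d) (Fin d) ℝ × (Fin d → ℝ) | f z ≤ 0} := by
    rintro x ⟨l, hl, rfl⟩
    obtain ⟨hbl, hmin⟩ := hb l hl
    have hkey := hmin _ (hMa _ hbl)
    simp only [Set.mem_setOf_eq, hf]
    have h1 : (∑ i, ∑ j, ((1 : Matrix (Fin d) (Fin d) ℝ) i j - M i j) *
        (Matrix.vecMulVec l (b l)) i j)
        = dotp l (b l) - ∑ i, ∑ j, M i j * (l i * b l j) := by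
      simp only [Matrix.vecMulVec_apply, sub_mul, Finset.sum_sub_distrib]
      congr 1
      simp only [Matrix.one_apply, ite_mul, one_mul, zero_mul, Finset.sum_ite_eq,
        Finset.mem_univ, if_true]
      rfl
    have h2 : dotp l (M.mulVec (b l) + a) =
        (∑ i, ∑ j, M i j * (l i * b l j)) + dotp l a := by
      simp only [dotp, Matrix.mulVec, dotProduct, Pi.add_apply,
        mul_add, Finset.sum_add_distrib, Finset.mul_sum]
      congr 1
      apply Finset.sum_congr rfl; intro i _
      apply Finset.sum_congr rfl; intro j _; ring
    have h3 : dotp (0 - a) l = - dotp l a := by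
      simp [dotp]; apply Finset.sum_congr rfl; intro i _; ring
    rw [h1, h3]
    rw [h2] at hkey
    linarith
  exact convexHull_min hsub hconv hs
end

section
/- Let $\mathcal{P}, \mathcal{L} \subset \mathbb{R}^d$ be compact convex sets, $b(\ell) \in \arg\min_{p\in\mathcal{P}}\langle \ell,p\rangle$, $\mathcal{S} = \mathrm{conv}\{(\ell\otimes b(\ell), \ell) : \ell \in \mathcal{L}\}$. Given sequences $(p_t)_{t=1}^T \subseteq \mathcal{P}$, $(\ell_t)_{t=1}^T \subseteq \mathcal{L}$, set $\bar{\kappa}_T = \frac{1}{T}\sum_t (\ell_t \otimes p_t, \ell_t)$. Then the linear swap regret satisfies $\mathsf{LinearSwapReg}_T \le 2T \left(\min_{s\in\mathcal{S}} \|\bar{\kappa}_T - s\|_F\right) \cdot \max_{\phi \in \mathrm{End}(\mathcal{P})} \|\phi\|_F$, assuming $\mathrm{End}(\mathcal{P})$ is compact so the maximum exists. -/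
/-- Norm of a (matrix, vector) pair: `√(‖K‖_F² + ‖v‖₂²)`. -/
noncomputable def pairNorm {d : ℕ} (x : Matrix (Fin d) (Fin d) ℝ × (Fin d → ℝ)) : ℝ :=
  Real.sqrt ((∑ i, ∑ j, x.1 i j ^ 2) + ∑ i, x.2 i ^ 2)
/-- Affine endomorphisms of `P`, represented as matrix-vector pairs `(M, a)`. -/
def EndPairs (d : ℕ) (P : Set (Fin d → ℝ)) : Set (Matrix (Fin d) (Fin d) ℝ × (Fin d → ℝ)) :=
  {Ma | ∀ q ∈ P, Ma.1.mulVec q + Ma.2 ∈ P}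

open scoped RealInnerProductSpace

noncomputable def embL (d : ℕ) :
    (Matrix (Fin d) (Fin d) ℝ × (Fin d → ℝ)) →ₗ[ℝ] EuclideanSpace ℝ ((Fin d × Fin d) ⊕ Fin d) where
  toFun x := WithLp.toLp 2 (fun i => Sum.elim (fun ij : Fin d × Fin d => x.1 ij.1 ij.2) x.2 i)
  map_add' x y := by ext i; cases i <;> rfl
  map_smul' c x := by ext i; cases i <;> rfl

lemma pairNorm_eq {d : ℕ} (x : Matrix (Fin d) (Fin d) ℝ × (Fin d → ℝ)) :
    pairNorm x = ‖embL d x‖ := by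
  rw [EuclideanSpace.norm_eq]
  simp [pairNorm, embL, Fintype.sum_sum_type, Fintype.sum_prod_type, Real.norm_eq_abs, sq_abs]

lemma pairNorm_nonneg {d : ℕ} (x : Matrix (Fin d) (Fin d) ℝ × (Fin d → ℝ)) :
    0 ≤ pairNorm x := Real.sqrt_nonneg _

lemma inner_emb {d : ℕ} (M : Matrix (Fin d) (Fin d) ℝ) (a li pt : Fin d → ℝ) :
    ⟪embL d (M, a), embL d (Matrix.vecMulVec li pt, li)⟫
      = dotp li (M.mulVec pt + a) := by
  simp [embL, PiLp.inner_apply, RCLike.inner_apply, Fintype.sum_sum_type, Fintype.sum_prod_type,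
    dotp, Matrix.mulVec, dotProduct, Matrix.vecMulVec, Finset.mul_sum, mul_add,
    Finset.sum_add_distrib]
  congr 1
  · funext x; apply Finset.sum_congr rfl; intros; ring

theorem linear_swap_regret_le_approachability_loss (d T : ℕ) (hT : 0 < T)
    (P L : Set (Fin d → ℝ))
    (hPconv : Convex ℝ P) (hPcomp : IsCompact P) (hPne : P.Nonempty)
    (hLconv : Convex ℝ L) (hLcomp : IsCompact L) (hLne : L.Nonempty)
    (hEnd : IsCompact (EndPairs d P))
    (b : (Fin d → ℝ) → (Fin d → ℝ))
    (hb : ∀ l ∈ L, b l ∈ P ∧ ∀ p ∈ P, dotp l (b l) ≤ dotp l p)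
    (p : Fin T → Fin d → ℝ) (l : Fin T → Fin d → ℝ)
    (hp : ∀ t, p t ∈ P) (hl : ∀ t, l t ∈ L) :
    (∑ t, dotp (l t) (p t)) -
        sInf ((fun Ma : Matrix (Fin d) (Fin d) ℝ × (Fin d → ℝ) =>
          ∑ t, dotp (l t) (Ma.1.mulVec (p t) + Ma.2)) '' EndPairs d P) ≤
      2 * T *
        sInf ((fun s => pairNorm
            (((T : ℝ)⁻¹ • ∑ t, (Matrix.vecMulVec (l t) (p t), l t)) - s)) ''
          convexHull ℝ {x : Matrix (Fin d) (Fin d) ℝ × (Fin d → ℝ) |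
            ∃ l' ∈ L, x = (Matrix.vecMulVec l' (b l'), l')}) *
        sSup (pairNorm '' EndPairs d P) := by
  classical
  have hTpos : (0:ℝ) < T := by exact_mod_cast hT
  set κ : Matrix (Fin d) (Fin d) ℝ × (Fin d → ℝ) :=
    (T:ℝ)⁻¹ • ∑ t, (Matrix.vecMulVec (l t) (p t), l t) with hκ
  set G : Set (Matrix (Fin d) (Fin d) ℝ × (Fin d → ℝ)) :=
    {x | ∃ l' ∈ L, x = (Matrix.vecMulVec l' (b l'), l')} with hGdef
  set R := sSup (pairNorm '' EndPairs d P) with hRdef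
  set A := ∑ t, dotp (l t) (p t) with hAdef
  set B := fun Ma : Matrix (Fin d) (Fin d) ℝ × (Fin d → ℝ) =>
    ∑ t, dotp (l t) (Ma.1.mulVec (p t) + Ma.2) with hBdef
  set I := sInf ((fun s => pairNorm (κ - s)) '' convexHull ℝ G) with hIdef
  have hid0 : ((1 : Matrix (Fin d) (Fin d) ℝ), (0 : Fin d → ℝ)) ∈ EndPairs d P := by
    intro q hq; simpa [Matrix.one_mulVec] using hq
  have hcont : Continuous (pairNorm (d := d)) := by
    have h : (pairNorm (d := d)) = fun x => ‖embL d x‖ := funext pairNorm_eq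
    rw [h]; exact ((embL d).continuous_of_finiteDimensional).norm
  have hBdd : BddAbove (pairNorm '' EndPairs d P) := (hEnd.image hcont).bddAbove
  have hφR : ∀ φ ∈ EndPairs d P, pairNorm φ ≤ R := fun φ hφ => le_csSup hBdd ⟨φ, hφ, rfl⟩
  have hR0 : 0 ≤ R := le_trans (pairNorm_nonneg _) (hφR _ hid0)
  -- key pointwise bound
  have hkey : ∀ s ∈ convexHull ℝ G,
      A - sInf (B '' EndPairs d P) ≤ 2 * T * R * pairNorm (κ - s) := by
    intro s hs
    have hstep : ∀ φ ∈ EndPairs d P, A - 2*T*R*pairNorm (κ - s) ≤ B φ := by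
      intro φ hφ
      set u : EuclideanSpace ℝ ((Fin d × Fin d) ⊕ Fin d) :=
        embL d ((1 : Matrix (Fin d) (Fin d) ℝ), (0 : Fin d → ℝ)) - embL d φ with hu
      have hux : ∀ (li pt : Fin d → ℝ), ⟪u, embL d (Matrix.vecMulVec li pt, li)⟫
          = dotp li pt - dotp li (φ.1.mulVec pt + φ.2) := by
        intro li pt
        rw [hu, inner_sub_left, inner_emb, inner_emb φ.1 φ.2]
        simp [Matrix.one_mulVec]
      have hSle : ∀ x ∈ convexHull ℝ G, ⟪u, embL d x⟫ ≤ 0 := by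
        have hconv : Convex ℝ {x : Matrix (Fin d) (Fin d) ℝ × (Fin d → ℝ) |
            ⟪u, embL d x⟫ ≤ 0} := by
          apply convex_halfSpace_le
          exact ⟨fun x y => by rw [map_add, inner_add_right],
            fun c x => by rw [map_smul, real_inner_smul_right, smul_eq_mul]⟩
        have hGsub : G ⊆ {x | ⟪u, embL d x⟫ ≤ 0} := by
          rintro x ⟨l', hl', rfl⟩
          rw [Set.mem_setOf_eq, hux]
          have h1 := (hb l' hl').1
          have h2 := (hb l' hl').2 _ (hφ _ h1)
          linarith
        exact fun x hx => convexHull_min hGsub hconv hx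
      have hsum : A - B φ = (T:ℝ) * ⟪u, embL d κ⟫ := by
        have h1 : embL d κ
            = (T:ℝ)⁻¹ • ∑ t, embL d (Matrix.vecMulVec (l t) (p t), l t) := by
          rw [hκ, map_smul, map_sum]
        rw [h1, real_inner_smul_right, inner_sum]
        have h2 : ∑ t, ⟪u, embL d (Matrix.vecMulVec (l t) (p t), l t)⟫ = A - B φ := by
          simp [hux, Finset.sum_sub_distrib, hAdef, hBdef]
        rw [h2]
        field_simp
      have hCS : ⟪u, embL d κ - embL d s⟫ ≤ 2*R*pairNorm (κ - s) := by
        calc ⟪u, embL d κ - embL d s⟫ ≤ ‖u‖ * ‖embL d κ - embL d s‖ :=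
              real_inner_le_norm _ _
        _ ≤ (pairNorm ((1 : Matrix (Fin d) (Fin d) ℝ), (0 : Fin d → ℝ)) + pairNorm φ)
              * pairNorm (κ - s) := by
            rw [← map_sub, ← pairNorm_eq]
            apply mul_le_mul_of_nonneg_right _ (pairNorm_nonneg _)
            rw [hu]
            refine le_trans (norm_sub_le _ _) ?_
            rw [← pairNorm_eq, ← pairNorm_eq]
        _ ≤ 2*R*pairNorm (κ - s) := by
            have h3 := hφR φ hφ
            have h4 := hφR _ hid0
            have h5 := pairNorm_nonneg (κ - s)
            nlinarith
      have hdec : ⟪u, embL d κ⟫ = ⟪u, embL d κ - embL d s⟫ + ⟪u, embL d s⟫ := by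
        rw [inner_sub_right]; ring
      have h6 := hSle s hs
      nlinarith [hsum, hCS, hdec, hTpos]
    have hInf : A - 2*T*R*pairNorm (κ - s) ≤ sInf (B '' EndPairs d P) := by
      refine le_csInf ⟨B ((1 : Matrix (Fin d) (Fin d) ℝ), (0 : Fin d → ℝ)), Set.mem_image_of_mem _ hid0⟩ ?_
      rintro v ⟨φ, hφ, rfl⟩
      exact hstep φ hφ
    linarith
  obtain ⟨l₀, hl₀⟩ := hLne
  have hsub := subset_convexHull ℝ G
  have hSne : ((fun s => pairNorm (κ - s)) '' convexHull ℝ G).Nonempty :=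
    ⟨_, ⟨_, hsub ⟨l₀, hl₀, rfl⟩, rfl⟩⟩
  have hI0 : 0 ≤ I := by
    apply Real.sInf_nonneg
    rintro v ⟨s, _, rfl⟩
    exact pairNorm_nonneg _
  rcases hR0.eq_or_lt with hRz | hRpos
  · obtain ⟨v₀, s₀, hs₀, hv₀⟩ := hSne
    have h7 := hkey s₀ hs₀
    rw [← hRz] at h7 ⊢
    nlinarith [pairNorm_nonneg (κ - s₀)]
  · have hc0 : 0 < 2*(T:ℝ)*R := by positivity
    have h2 : (A - sInf (B '' EndPairs d P)) / (2*T*R) ≤ I := by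
      apply le_csInf hSne
      rintro v ⟨s, hs, rfl⟩
      rw [div_le_iff₀ hc0]
      have := hkey s hs
      linarith
    rw [div_le_iff₀ hc0] at h2
    calc A - sInf (B '' EndPairs d P) ≤ I * (2*T*R) := h2
    _ = 2*T*I*R := by ring
end
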